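/- Let e0, e1 be the standard basis of ℂ², P0 = |e0⟩⟨e0|, and for α ∈ ℝ define ε_α = (1/√2)(e0⊗e1 + e^{iα} e1⊗e0) ∈ ℂ⁴. Then the convex hull (over ℝ) of { |ε_α⟩⟨ε_α| : α ∈ ℝ } is exactly the set of 4×4 positive semidefinite complex matrices ρ of trace 1 satisfying trace(ρ · (σz ⊗ σz)) = −1, trace(ρ · (P0 ⊗ I₂)) = 1/2, and trace(ρ · (I₂ ⊗ P0)) = 1/2. -/

import Mathlib

open Matrix Kronecker
open scoped ComplexOrder

noncomputable section

/-- The outer product `|u⟩⟨v|` of two vectors. -/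
def outer {ι : Type*} (u v : ι → ℂ) : Matrix ι ι ℂ :=
  Matrix.of fun i j => u i * star (v j)

/-- The tensor (Kronecker) product of two qubit vectors. -/
def tens (u v : Fin 2 → ℂ) : Fin 2 × Fin 2 → ℂ := fun p => u p.1 * v p.2

def e0 : Fin 2 → ℂ := ![1, 0]
def e1 : Fin 2 → ℂ := ![0, 1]

/-- The Pauli matrix σz. -/
def sigmaZ : Matrix (Fin 2) (Fin 2) ℂ := !![1, 0; 0, -1]

/-- `ε_α = (1/√2)(e0⊗e1 + e^{iα} e1⊗e0)`. -/
def eps (α : ℝ) : Fin 2 × Fin 2 → ℂ :=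
  ((Real.sqrt 2 : ℂ))⁻¹ • (tens e0 e1 + Complex.exp ((α : ℂ) * Complex.I) • tens e1 e0)

/-! ### Auxiliary lemmas -/

lemma outer_posSemidef {ι : Type*} [Fintype ι] (u : ι → ℂ) : (outer u u).PosSemidef := by
  refine Matrix.PosSemidef.of_dotProduct_mulVec_nonneg ?_ ?_
  · ext i j
    simp [outer, Matrix.conjTranspose_apply, mul_comm]
  · intro x
    have h : star x ⬝ᵥ (outer u u) *ᵥ x = star (star u ⬝ᵥ x) * (star u ⬝ᵥ x) := by
      simp [dotProduct, mulVec, outer, Finset.mul_sum, Finset.sum_mul]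
      rw [Finset.sum_comm]
      congr 1; ext i; congr 1; ext j; ring
    rw [h]
    exact star_mul_self_nonneg _

lemma psd_diag_nonneg {ι : Type*} [Fintype ι] [DecidableEq ι] {ρ : Matrix ι ι ℂ}
    (h : ρ.PosSemidef) (i : ι) : 0 ≤ ρ i i := by
  have := h.dotProduct_mulVec_nonneg (Pi.single i 1)
  simpa [dotProduct, mulVec, Pi.single_apply] using this

/-- Evaluation of the quadratic form at `single j 1 + c • single i 1`. -/
lemma psd_quad_form {ι : Type*} [Fintype ι] [DecidableEq ι] (ρ : Matrix ι ι ℂ)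
    {i j : ι} (hji : j ≠ i) (c : ℂ) :
    star ((Pi.single j 1 : ι → ℂ) + c • (Pi.single i 1 : ι → ℂ)) ⬝ᵥ
      ρ *ᵥ ((Pi.single j 1 : ι → ℂ) + c • (Pi.single i 1 : ι → ℂ))
      = ρ j j + star c * ρ i j + c * ρ j i + star c * c * ρ i i := by
  simp [dotProduct, mulVec, Pi.single_apply, Finset.mul_sum, Finset.sum_add_distrib,
    Finset.sum_ite_eq, Finset.sum_ite_eq', mul_add, add_mul, star_add, star_smul, hji,
    apply_ite (starRingEnd ℂ)]
  ring

lemma psd_row_eq_zero {ι : Type*} [Fintype ι] [DecidableEq ι] {ρ : Matrix ι ι ℂ}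
    (h : ρ.PosSemidef) {i : ι} (hi : ρ i i = 0) (j : ι) : ρ i j = 0 := by
  rcases eq_or_ne j i with rfl | hji
  · exact hi
  have herm := h.1
  have hij : ρ i j = star (ρ j i) := by
    conv_lhs => rw [← herm]
    simp [Matrix.conjTranspose_apply]
  set N := Complex.normSq (ρ j i) with hN
  by_contra hne
  have hNpos : 0 < N := by
    rw [hN]
    exact Complex.normSq_pos.mpr (fun h0 => hne (by rw [hij, h0, star_zero]))
  have hjj : 0 ≤ (ρ j j).re := (Complex.le_def.mp (psd_diag_nonneg h j)).1.trans_eq' (by simp)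
  set t : ℝ := (Complex.re (ρ j j) + 1) / (2 * N) with ht
  have htpos : 0 < t := div_pos (by linarith) (by linarith)
  have hq := h.dotProduct_mulVec_nonneg ((Pi.single j 1 : ι → ℂ) + (-(t:ℂ) * star (ρ j i)) • (Pi.single i 1 : ι → ℂ))
  rw [psd_quad_form ρ hji] at hq
  rw [hi, hij] at hq
  have h1 : ρ j j + star (-(t:ℂ) * star (ρ j i)) * star (ρ j i)
      + (-(t:ℂ) * star (ρ j i)) * ρ j i + star (-(t:ℂ) * star (ρ j i)) * (-(t:ℂ) * star (ρ j i)) * 0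
      = ρ j j - ((2 * t * N : ℝ) : ℂ) := by
    rw [hN]
    simp only [mul_zero, add_zero, RCLike.star_def, _root_.map_mul, map_neg, Complex.conj_conj,
      Complex.conj_ofReal]
    push_cast
    rw [Complex.normSq_eq_conj_mul_self]
    ring
  rw [h1] at hq
  have hre := (Complex.le_def.mp hq).1
  simp only [Complex.zero_re, Complex.sub_re, Complex.ofReal_re] at hre
  rw [ht] at hre
  have : 2 * ((Complex.re (ρ j j) + 1) / (2 * N)) * N = Complex.re (ρ j j) + 1 := by
    field_simp
  rw [this] at hre
  linarith

lemma eps_apply (α : ℝ) : eps α = fun p =>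
    if p = (0,1) then ((Real.sqrt 2 : ℂ))⁻¹
    else if p = (1,0) then ((Real.sqrt 2 : ℂ))⁻¹ * Complex.exp ((α : ℂ) * Complex.I)
    else 0 := by
  funext p
  obtain ⟨i, j⟩ := p
  fin_cases i <;> fin_cases j <;>
    simp [eps, tens, e0, e1, Prod.ext_iff, Fin.ext_iff]

lemma sqrt2_mul : ((Real.sqrt 2 : ℂ))⁻¹ * ((Real.sqrt 2 : ℂ))⁻¹ = 1/2 := by
  rw [← mul_inv]
  norm_cast
  rw [Real.mul_self_sqrt (by norm_num : (0:ℝ) ≤ 2)]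
  norm_num

lemma exp_mul_conj (α : ℝ) : Complex.exp ((α : ℂ) * Complex.I) *
    (starRingEnd ℂ) (Complex.exp ((α : ℂ) * Complex.I)) = 1 := by
  rw [← Complex.exp_conj, ← Complex.exp_add]
  simp [Complex.conj_ofReal]

/-- The explicit entries of the generator matrix, as a function of `z = e^{iα}`. -/
def genM (z : ℂ) : Matrix (Fin 2 × Fin 2) (Fin 2 × Fin 2) ℂ :=
  Matrix.of fun p q =>
    if p = (0,1) ∧ q = (0,1) then 1/2
    else if p = (0,1) ∧ q = (1,0) then (starRingEnd ℂ) z / 2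
    else if p = (1,0) ∧ q = (0,1) then z / 2
    else if p = (1,0) ∧ q = (1,0) then 1/2
    else 0

lemma outer_eps_eq (α : ℝ) :
    outer (eps α) (eps α) = genM (Complex.exp ((α : ℂ) * Complex.I)) := by
  ext p q
  obtain ⟨i, j⟩ := p; obtain ⟨k, l⟩ := q
  fin_cases i <;> fin_cases j <;> fin_cases k <;> fin_cases l <;>
    simp [outer, genM, eps_apply, Prod.ext_iff, Fin.ext_iff, -Fin.val_eq_zero_iff, _root_.map_mul,
      Complex.conj_ofReal] <;>
    first
      | (rw [show ((Real.sqrt 2:ℂ))⁻¹ * ((Real.sqrt 2:ℂ))⁻¹ = 1/2 from sqrt2_mul]; ring)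
      | (linear_combination ((starRingEnd ℂ) (Complex.exp ((α : ℂ) * Complex.I))) * sqrt2_mul)
      | (linear_combination (Complex.exp ((α : ℂ) * Complex.I)) * sqrt2_mul)
      | (linear_combination (Complex.exp ((α : ℂ) * Complex.I) *
          (starRingEnd ℂ) (Complex.exp ((α : ℂ) * Complex.I))) * sqrt2_mul
          + (1/2) * exp_mul_conj α)

section Traces
variable (ρ : Matrix (Fin 2 × Fin 2) (Fin 2 × Fin 2) ℂ)

lemma trace_eq : ρ.trace = ρ (0,0) (0,0) + ρ (0,1) (0,1) + ρ (1,0) (1,0) + ρ (1,1) (1,1) := by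
  simp [Matrix.trace, Fintype.sum_prod_type, Fin.sum_univ_two, Matrix.diag]
  ring

lemma trace_zz : (ρ * (sigmaZ ⊗ₖ sigmaZ)).trace
    = ρ (0,0) (0,0) - ρ (0,1) (0,1) - ρ (1,0) (1,0) + ρ (1,1) (1,1) := by
  simp [Matrix.trace, Matrix.mul_apply, Fintype.sum_prod_type, Fin.sum_univ_two,
    Matrix.diag, sigmaZ]
  ring

lemma trace_p0i : (ρ * (outer e0 e0 ⊗ₖ (1 : Matrix (Fin 2) (Fin 2) ℂ))).trace
    = ρ (0,0) (0,0) + ρ (0,1) (0,1) := by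
  simp [Matrix.trace, Matrix.mul_apply, Fintype.sum_prod_type, Fin.sum_univ_two,
    Matrix.diag, outer, e0, Matrix.one_apply]

lemma trace_ip0 : (ρ * ((1 : Matrix (Fin 2) (Fin 2) ℂ) ⊗ₖ outer e0 e0)).trace
    = ρ (0,0) (0,0) + ρ (1,0) (1,0) := by
  simp [Matrix.trace, Matrix.mul_apply, Fintype.sum_prod_type, Fin.sum_univ_two,
    Matrix.diag, outer, e0, Matrix.one_apply]

end Traces

lemma psd_real_smul {ι : Type*} [Fintype ι] {ρ : Matrix ι ι ℂ} (h : ρ.PosSemidef)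
    {a : ℝ} (ha : 0 ≤ a) : (a • ρ).PosSemidef := by
  have key : a • ρ = ((a : ℂ)) • ρ := by
    ext i j
    simp [Complex.real_smul]
  rw [key]
  refine Matrix.PosSemidef.of_dotProduct_mulVec_nonneg ?_ ?_
  · ext i j
    have := congrFun (congrFun h.1 i) j
    simp only [Matrix.conjTranspose_apply, Matrix.smul_apply, star_smul] at *
    rw [this]
    congr 1
    simp [Complex.conj_ofReal]
  · intro x
    have := h.dotProduct_mulVec_nonneg x
    calc (0:ℂ) ≤ (a:ℂ) * (star x ⬝ᵥ ρ *ᵥ x) :=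
          mul_nonneg (by exact_mod_cast Complex.zero_le_real.mpr ha) this
      _ = star x ⬝ᵥ ((a : ℂ) • ρ) *ᵥ x := by
          simp [Matrix.smul_mulVec, dotProduct_smul]

theorem scenario_one_states_characterization :
    convexHull ℝ {M | ∃ α : ℝ, M = outer (eps α) (eps α)}
      = {ρ : Matrix (Fin 2 × Fin 2) (Fin 2 × Fin 2) ℂ |
          ρ.PosSemidef ∧ ρ.trace = 1 ∧
          (ρ * (sigmaZ ⊗ₖ sigmaZ)).trace = -1 ∧
          (ρ * (outer e0 e0 ⊗ₖ (1 : Matrix (Fin 2) (Fin 2) ℂ))).trace = 1/2 ∧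
          (ρ * ((1 : Matrix (Fin 2) (Fin 2) ℂ) ⊗ₖ outer e0 e0)).trace = 1/2} := by
  apply Set.Subset.antisymm
  · -- hull ⊆ RHS
    apply convexHull_min
    · rintro M ⟨α, rfl⟩
      refine ⟨outer_posSemidef _, ?_, ?_, ?_, ?_⟩ <;>
        rw [outer_eps_eq α] <;>
        [rw [trace_eq]; rw [trace_zz]; rw [trace_p0i]; rw [trace_ip0]] <;>
        norm_num [genM, Prod.ext_iff, Fin.ext_iff, -Fin.val_eq_zero_iff]
    · -- RHS is convex
      rintro x ⟨hx1, hx2, hx3, hx4, hx5⟩ y ⟨hy1, hy2, hy3, hy4, hy5⟩ a b ha hb hab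
      have habC : (a : ℂ) + (b : ℂ) = 1 := by exact_mod_cast congrArg (fun r : ℝ => (r : ℂ)) hab
      have hsmul : ∀ (c : ℝ) (M : Matrix (Fin 2 × Fin 2) (Fin 2 × Fin 2) ℂ),
          c • M = ((c : ℂ)) • M := by
        intro c M; ext i j; simp [Complex.real_smul]
      refine ⟨(psd_real_smul hx1 ha).add (psd_real_smul hy1 hb), ?_, ?_, ?_, ?_⟩ <;>
        simp only [hsmul, Matrix.add_mul, Matrix.smul_mul, Matrix.trace_add,
          Matrix.trace_smul, smul_eq_mul, hx2, hy2, hx3, hy3, hx4, hy4, hx5, hy5] <;>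
        first
          | linear_combination habC
          | linear_combination -habC
          | linear_combination habC/2
          | linear_combination -habC/2
  · -- RHS ⊆ hull
    rintro ρ ⟨hpsd, h1, h2, h3, h4⟩
    rw [trace_eq] at h1
    rw [trace_zz] at h2
    rw [trace_p0i] at h3
    rw [trace_ip0] at h4
    -- diagonal entries
    have had : ρ (0,0) (0,0) + ρ (1,1) (1,1) = 0 := by linear_combination (h1 + h2) / 2
    have ha0 : (0:ℂ) ≤ ρ (0,0) (0,0) := psd_diag_nonneg hpsd _
    have hd0 : (0:ℂ) ≤ ρ (1,1) (1,1) := psd_diag_nonneg hpsd _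
    have ha : ρ (0,0) (0,0) = 0 := by
      have : ρ (0,0) (0,0) ≤ 0 := by
        have : ρ (0,0) (0,0) = -ρ (1,1) (1,1) := by linear_combination had
        rw [this]; exact neg_nonpos_of_nonneg hd0
      exact le_antisymm this ha0
    have hd : ρ (1,1) (1,1) = 0 := by linear_combination had - ha
    have hb : ρ (0,1) (0,1) = 1/2 := by linear_combination h3 - ha
    have hc : ρ (1,0) (1,0) = 1/2 := by linear_combination h4 - ha
    -- zero rows and columns
    have hrow0 : ∀ j, ρ (0,0) j = 0 := psd_row_eq_zero hpsd ha
    have hrow1 : ∀ j, ρ (1,1) j = 0 := psd_row_eq_zero hpsd hd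
    have hcolgen : ∀ i j, ρ i j = star (ρ j i) := by
      intro i j
      conv_lhs => rw [← hpsd.1]
      simp [Matrix.conjTranspose_apply]
    have hcol0 : ∀ j, ρ j (0,0) = 0 := fun j => by rw [hcolgen, hrow0, star_zero]
    have hcol1 : ∀ j, ρ j (1,1) = 0 := fun j => by rw [hcolgen, hrow1, star_zero]
    -- the off-diagonal entry
    set w : ℂ := ρ (0,1) (1,0) with hw
    have hconjw : ρ (1,0) (0,1) = (starRingEnd ℂ) w := by
      rw [hcolgen]; rfl
    set r : ℝ := ‖w‖ with hr
    have hrnn : 0 ≤ r := norm_nonneg w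
    set E : ℂ := Complex.exp ((Complex.arg w : ℂ) * Complex.I) with hE
    have hr_exp : ((r:ℝ):ℂ) * E = w := Complex.norm_mul_exp_arg_mul_I w
    have hcwE : (starRingEnd ℂ) w = ((r:ℝ):ℂ) * (starRingEnd ℂ) E := by
      rw [← hr_exp]
      simp [_root_.map_mul, Complex.conj_ofReal]
    have hEE : E * (starRingEnd ℂ) E = 1 := by rw [hE]; exact exp_mul_conj _
    -- |w| ≤ 1/2
    have hrle : r ≤ 1/2 := by
      have hq := hpsd.dotProduct_mulVec_nonneg ((Pi.single ((1:Fin 2),(0:Fin 2)) 1 : Fin 2 × Fin 2 → ℂ)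
        + (-E) • (Pi.single ((0:Fin 2),(1:Fin 2)) 1 : Fin 2 × Fin 2 → ℂ))
      rw [psd_quad_form ρ (by decide)] at hq
      rw [hb, hc, ← hw, hconjw] at hq
      have hval : (1/2:ℂ) + star (-E) * w + (-E) * ((starRingEnd ℂ) w)
          + star (-E) * (-E) * (1/2) = ((1 - 2*r : ℝ) : ℂ) := by
        simp only [star_neg, RCLike.star_def]
        rw [hcwE, ← hr_exp]
        push_cast
        linear_combination (1/2 - 2*((r:ℝ):ℂ)) * hEE
      rw [hval] at hq
      have := (Complex.le_def.mp hq).1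
      simp only [Complex.zero_re, Complex.ofReal_re] at this
      linarith
    -- decomposition data
    set α : ℝ := -Complex.arg w with hα
    set β : ℝ := α + Real.pi with hβ
    set z1 : ℂ := Complex.exp ((α : ℂ) * Complex.I) with hz1
    set z2 : ℂ := Complex.exp ((β : ℂ) * Complex.I) with hz2def
    have hz2 : z2 = -z1 := by
      rw [hz2def, hz1, hβ]
      push_cast
      rw [add_mul, Complex.exp_add, Complex.exp_pi_mul_I]
      ring
    have hz1conj : (starRingEnd ℂ) z1 = E := by
      rw [hz1, hE, ← Complex.exp_conj]
      congr 1
      rw [hα]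
      push_cast
      simp [Complex.conj_I, Complex.conj_ofReal]
    have hz1E : z1 = (starRingEnd ℂ) E := by
      rw [← hz1conj, Complex.conj_conj]
    have hr_exp' : ((r:ℝ):ℂ) * z1 = (starRingEnd ℂ) w := by
      rw [hz1E]; exact hcwE.symm
    set t : ℝ := 1/2 + r with htdef
    have ht0 : 0 ≤ t := by rw [htdef]; linarith
    have ht1 : t ≤ 1 := by rw [htdef]; linarith
    -- the convex combination equals ρ
    have hρeq : t • genM z1 + (1 - t) • genM z2 = ρ := by
      have hsmul : ∀ (c : ℝ) (x : ℂ), c • x = (c : ℂ) * x := fun c x => by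
        rw [Complex.real_smul]
      ext p q
      obtain ⟨i, j⟩ := p; obtain ⟨k, l⟩ := q
      fin_cases i <;> fin_cases j <;> fin_cases k <;> fin_cases l <;>
        simp only [Matrix.add_apply, Matrix.smul_apply, genM, Matrix.of_apply, hsmul,
          Fin.mk_zero, Fin.mk_one] <;>
        norm_num [Prod.ext_iff, Fin.ext_iff] <;>
        first
          | exact (hrow0 _).symm
          | exact (hrow1 _).symm
          | exact (hcol0 _).symm
          | exact (hcol1 _).symm
          | (rw [hb]; ring)
          | (rw [hc]; ring)
          | (rw [← hw]; simp only [hz2, map_neg, hz1conj]; rw [htdef]; push_cast;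
             linear_combination hr_exp)
          | (rw [hconjw]; simp only [hz2]; rw [htdef]; push_cast;
             linear_combination hr_exp')
    have hmem1 : genM z1 ∈ {M | ∃ γ : ℝ, M = outer (eps γ) (eps γ)} :=
      ⟨α, (outer_eps_eq α).symm⟩
    have hmem2 : genM z2 ∈ {M | ∃ γ : ℝ, M = outer (eps γ) (eps γ)} :=
      ⟨β, (outer_eps_eq β).symm⟩
    rw [← hρeq]
    exact segment_subset_convexHull hmem1 hmem2 ⟨t, 1 - t, ht0, by linarith, by ring, rfl⟩
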